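/- arXiv:math/0104033 — 4 statements merged into one kernel-verified Lean document; each statement's English description precedes it below -/
import Mathlib

section
/- Let C be a locally noetherian Grothendieck category and S a simple object such that the full subcategory Sum(S) of direct sums of copies of S is closed under products (equivalently, the inclusion Sum(S) → C has a left adjoint). Then S is tiny: for every noetherian object M, Hom(M,S) is finitely generated over End(S). -/
/-!
Every `f : M ⟶ S` factors through the canonical map `M ⟶ ∏_{Hom(M, S)} S`, and by hypothesis
this product is a coproduct `∐_σ S`, i.e. the filtered union of its finite subcoproducts.
By AB5 the preimages of these finite subcoproducts form a directed family of subobjects of `M`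
exhausting `M`; as `M` is noetherian, one of them is all of `M`. So the canonical map factors
through some `S^n`, and `Hom(M, S)` is a quotient of `Hom(S^n, S) ≅ (End S)^n`.
-/

open CategoryTheory CategoryTheory.Limits

universe v u

namespace NCSpaces

variable {C : Type u} [Category.{v} C] [Preadditive C]

/-- The hom-group `M ⟶ S` is a left module over the endomorphism ring `End S`,
with `φ • f = f ≫ φ`. -/
instance homSMul (M S : C) : SMul (End S) (M ⟶ S) := ⟨fun φ f => f ≫ φ⟩

@[simp] lemma homSMul_def (M S : C) (φ : End S) (f : M ⟶ S) : φ • f = f ≫ φ := rfl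

instance homModule (M S : C) : Module (End S) (M ⟶ S) where
  one_smul f := by simp [End.one_def]
  mul_smul φ ψ f := by simp [End.mul_def]
  smul_zero φ := by simp
  smul_add φ f g := by simp
  add_smul φ ψ f := by exact Preadditive.comp_add _ _ _ f φ ψ
  zero_smul f := by simp

/-- A simple object `S` is *tiny* if `Hom(M, S)` is a finitely generated module over the
division ring `End S` for every noetherian object `M`. -/
def IsTiny (S : C) : Prop :=
  ∀ M : C, IsNoetherianObject M → Module.Finite (End S) (M ⟶ S)

end NCSpaces

namespace CategoryTheory

attribute [local instance] IsFiltered.isConnected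

section Compactness

variable {C : Type*} [Category C] {J : Type*} [Category J] [IsFiltered J]

lemma Limits.IsColimit.exists_isIso_ι_app_of_isNoetherianObject [Balanced C] {Y : J ⥤ C}
    {c : Cocone Y} (hc : IsColimit c) [IsNoetherianObject c.pt] [∀ j, Mono (c.ι.app j)] :
    ∃ j, IsIso (c.ι.app j) := by
  let P (j : J) : Subobject c.pt := Subobject.mk (c.ι.app j)
  have hP {j k : J} (u : j ⟶ k) : P j ≤ P k := Subobject.mk_le_mk_of_comm (Y.map u) (by simp)
  obtain ⟨_, ⟨j₀, rfl⟩, hmax⟩ :=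
    wellFounded_gt.has_min (Set.range P) ⟨_, Set.mem_range_self IsFiltered.nonempty.some⟩
  have hle (j : J) : P j ≤ P j₀ := by
    have := hP (IsFiltered.rightToMax j j₀)
    rw [this.lt_or_eq.resolve_left (hmax _ (Set.mem_range_self _))]
    exact hP (IsFiltered.leftToMax j j₀)
  have : Epi (c.ι.app j₀) := ⟨fun u v h => hc.hom_ext fun j => by
    rw [← Subobject.ofMkLEMk_comp (hle j), Category.assoc, Category.assoc, h]⟩
  exact ⟨j₀, isIso_of_mono_of_epi _⟩

lemma Limits.IsColimit.exists_fac_of_isNoetherianObject [Abelian C] [HasColimitsOfShape J C]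
    [HasExactColimitsOfShape J C] {Y : J ⥤ C} {c : Cocone Y} (hc : IsColimit c)
    [∀ j, Mono (c.ι.app j)] {X : C} [IsNoetherianObject X] (z : X ⟶ c.pt) :
    ∃ (j : J) (y : X ⟶ Y.obj j), y ≫ c.ι.app j = z := by
  have := NatTrans.mono_of_mono_app c.ι
  let s := pullback.snd c.ι ((Functor.const J).map z)
  -- AB5: pulling the legs of `c` back along `z` exhibits `X` as a filtered union of subobjects.
  obtain ⟨j, _⟩ :=
    (hc.pullbackOfHasExactColimitsOfShape z).exists_isIso_ι_app_of_isNoetherianObject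
  refine ⟨j, inv (s.app j) ≫ (pullback.fst c.ι _).app j, ?_⟩
  rw [Category.assoc, ← NatTrans.comp_app, pullback.condition]
  simp [s]

end Compactness

namespace Limits.CoproductsFromFiniteFiltered

instance {C : Type*} [Category C] [HasZeroMorphisms C] [HasFiniteCoproducts C] {α : Type*}
    (f : α → C) [HasCoproduct f] (s : Finset (Discrete α)) :
    IsSplitMono ((finiteSubcoproductsCocone f).ι.app s) := by
  classical
  let r : ∐ f ⟶ (liftToFinsetObj (Discrete.functor f)).obj s :=
    Sigma.desc fun a => if h : ⟨a⟩ ∈ s then Sigma.ι (fun x : s => f x.1.as) ⟨⟨a⟩, h⟩ else 0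
  refine IsSplitMono.mk' ⟨r, Sigma.hom_ext _ _ fun x => ?_⟩
  erw [Sigma.ι_desc_assoc, Sigma.ι_desc, dif_pos x.2, Category.comp_id]
  rfl

end Limits.CoproductsFromFiniteFiltered

end CategoryTheory

namespace NCSpaces

section HomModule

variable {C : Type*} [Category C] [Preadditive C]

def precompLinearMap {M N : C} (g : M ⟶ N) (S : C) : (N ⟶ S) →ₗ[End S] (M ⟶ S) where
  toFun k := g ≫ k
  map_add' _ _ := Preadditive.comp_add ..
  map_smul' _ _ := (Category.assoc ..).symm

lemma moduleFinite_of_pi_lift_fac {M N S : C} [HasProduct fun _ : M ⟶ S => S]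
    [Module.Finite (End S) (N ⟶ S)] (g : M ⟶ N) (h : N ⟶ ∏ᶜ fun _ : M ⟶ S => S)
    (hgh : g ≫ h = Pi.lift fun f => f) : Module.Finite (End S) (M ⟶ S) :=
  Module.Finite.of_surjective (precompLinearMap g S) fun f =>
    ⟨h ≫ Pi.π _ f, by simp [reassoc_of% hgh, precompLinearMap]⟩

noncomputable def sigmaDescLinearMap (ι : Type*) (S : C) [HasCoproduct fun _ : ι => S] :
    (ι → End S) →ₗ[End S] (∐ (fun _ : ι => S) ⟶ S) where
  toFun φ := Sigma.desc φ
  map_add' _ _ := Sigma.hom_ext _ _ fun _ => by simp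
  map_smul' _ _ := Sigma.hom_ext _ _ fun _ => by simp [End.mul_def]

instance {ι : Type*} [Finite ι] (S : C) [HasCoproduct fun _ : ι => S] :
    Module.Finite (End S) (∐ (fun _ : ι => S) ⟶ S) :=
  Module.Finite.of_surjective (sigmaDescLinearMap ι S) fun k =>
    ⟨fun i => Sigma.ι (fun _ => S) i ≫ k, Sigma.hom_ext _ _ fun _ => by simp [sigmaDescLinearMap]⟩

end HomModule

open CoproductsFromFiniteFiltered

theorem tiny_of_sum_closed_under_products_general
    {C : Type u} [Category.{v} C]
    [Abelian C] [HasLimits C] [HasColimits C] [HasFilteredColimits C] [AB5 C]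
    (S : C)
    (hprod : ∀ ι : Type v, ∃ σ : Type v,
      Nonempty ((∏ᶜ (fun _ : ι => S)) ≅ ∐ (fun _ : σ => S))) :
    IsTiny S := by
  intro M _
  obtain ⟨σ, ⟨e⟩⟩ := hprod (M ⟶ S)
  obtain ⟨s, g, hg⟩ :=
    (isColimitFiniteSubproductsCocone fun _ : σ => S).exists_fac_of_isNoetherianObject
      (Pi.lift (fun f : M ⟶ S => f) ≫ e.hom)
  have : Module.Finite (End S) ((liftToFinsetObj (Discrete.functor fun _ : σ => S)).obj s ⟶ S) :=
    inferInstanceAs (Module.Finite (End S) ((∐ fun _ : s => S) ⟶ S))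
  exact moduleFinite_of_pi_lift_fac g ((finiteSubcoproductsCocone _).ι.app s ≫ e.inv)
    (by erw [reassoc_of% hg, Category.assoc, e.hom_inv_id, Category.comp_id])

/-- let `S` be a simple object of a locally noetherian Grothendieck category
such that the full subcategory `Sum S` of direct sums of copies of `S` is closed under
products (every product of copies of `S` is a direct sum of copies of `S`).  Then `S` is
tiny: `Hom(M, S)` is finitely generated over `End S` for every noetherian `M`. -/
theorem tiny_of_sum_closed_under_products
    {C : Type u} [Category.{v} C]
    [Abelian C] [HasLimits C] [HasColimits C] [HasFilteredColimits C] [AB5 C]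
    (κ : Type v) (Gen : κ → C) (hsep : ObjectProperty.IsSeparating (Set.range Gen))
    (hnoeth : ∀ i, IsNoetherianObject (Gen i))
    (S : C) [Simple S]
    (hprod : ∀ ι : Type v, ∃ σ : Type v,
      Nonempty ((∏ᶜ (fun _ : ι => S)) ≅ ∐ (fun _ : σ => S))) :
    IsTiny S :=
  tiny_of_sum_closed_under_products_general S hprod

end NCSpaces
end

section
/- Let R be a ring and M a noetherian right R-module. Suppose the smallest full subcategory of Mod R closed under subquotients and direct limits containing M (namely, all subquotients of direct sums of copies of M) contains R/Ann(M). Then Ann(M) = ⋂_{i=1}^n Ann(m_i) for some finite set of elements m_1,…,m_n ∈ M. -/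
open CategoryTheory CategoryTheory.Limits

universe u

namespace NCSpaces

variable {R : Type u} [Ring R]

/-- A full subcategory (given by a set of objects) of `Mod R` is *weakly closed* if it is
closed under isomorphisms, subobjects, quotient objects, and filtered colimits. -/
structure IsWeaklyClosed (W : Set (ModuleCat.{u} R)) : Prop where
  mem_of_iso : ∀ {X Y : ModuleCat.{u} R}, (X ≅ Y) → X ∈ W → Y ∈ W
  mem_of_mono : ∀ {X Y : ModuleCat.{u} R} (f : X ⟶ Y), Mono f → Y ∈ W → X ∈ W
  mem_of_epi : ∀ {X Y : ModuleCat.{u} R} (f : X ⟶ Y), Epi f → X ∈ W → Y ∈ W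
  mem_of_colimit : ∀ (J : Type u) (_ : SmallCategory J) (_ : IsFiltered J)
      (F : J ⥤ ModuleCat.{u} R) (c : Cocone F), IsColimit c →
      (∀ j, F.obj j ∈ W) → c.pt ∈ W

/-- let `M` be a noetherian `R`-module such that `R/Ann(M)` belongs to the
smallest full subcategory of `Mod R` closed under subquotients and direct limits that
contains `M`.  Then `Ann(M) = ⋂ᵢ Ann(mᵢ)` for finitely many elements `m₁, …, mₙ ∈ M`. -/
theorem annihilator_eq_finite_inter_of_mem_smallest_weaklyClosed
    (M : Type u) [AddCommGroup M] [Module R M] [IsNoetherian R M]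
    (h : ∀ W : Set (ModuleCat.{u} R), IsWeaklyClosed W → ModuleCat.of R M ∈ W →
      ModuleCat.of R (R ⧸ Module.annihilator R M) ∈ W) :
    ∃ (n : ℕ) (m : Fin n → M),
      Module.annihilator R M =
        ⨅ i, LinearMap.ker (LinearMap.toSpanSingleton R M (m i)) := by
  classical
  set W : Set (ModuleCat.{u} R) :=
    {X | ∀ x : X, ∃ (n : ℕ) (m : Fin n → M),
      (⨅ i, LinearMap.ker (LinearMap.toSpanSingleton R M (m i))) ≤
        LinearMap.ker (LinearMap.toSpanSingleton R X x)} with hW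
  have hWclosed : IsWeaklyClosed W := by
    constructor
    · intro X Y e hX y
      obtain ⟨n, m, hm⟩ := hX (e.inv y)
      refine ⟨n, m, fun r hr => ?_⟩
      have h1 : r • e.inv y = 0 := hm hr
      have h2 : e.hom (e.inv y) = y := by
        have h3 := e.inv_hom_id
        calc e.hom (e.inv y) = (e.inv ≫ e.hom) y := rfl
          _ = y := by rw [h3]; rfl
      simp only [LinearMap.mem_ker, LinearMap.toSpanSingleton_apply]
      rw [← h2, ← map_smul, h1, map_zero]
    · intro X Y f hf hY x
      obtain ⟨n, m, hm⟩ := hY (f x)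
      refine ⟨n, m, fun r hr => ?_⟩
      have h1 : r • f x = 0 := hm hr
      have h2 : f (r • x) = f 0 := by simpa [map_smul] using h1
      have hinj := (ModuleCat.mono_iff_injective f).mp hf
      simpa [LinearMap.mem_ker, LinearMap.toSpanSingleton_apply] using hinj h2
    · intro X Y f hf hX y
      obtain ⟨x, rfl⟩ := (ModuleCat.epi_iff_surjective f).mp hf y
      obtain ⟨n, m, hm⟩ := hX x
      refine ⟨n, m, fun r hr => ?_⟩
      have h1 : r • x = 0 := hm hr
      have : f (r • x) = f 0 := by rw [h1]
      simpa [LinearMap.mem_ker, LinearMap.toSpanSingleton_apply, map_smul] using this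
    · intro J _ _ F c hc hF x
      obtain ⟨j, y, rfl⟩ := Concrete.isColimit_exists_rep F hc x
      obtain ⟨n, m, hm⟩ := hF j y
      refine ⟨n, m, fun r hr => ?_⟩
      have h1 : r • y = 0 := hm hr
      have : c.ι.app j (r • y) = c.ι.app j 0 := by rw [h1]
      simpa [LinearMap.mem_ker, LinearMap.toSpanSingleton_apply, map_smul] using this
  have hMmem : ModuleCat.of R M ∈ W := by
    intro x
    exact ⟨1, fun _ => x, fun r hr => by simpa using (Submodule.mem_iInf _).mp hr 0⟩
  obtain ⟨n, m, hm⟩ := h W hWclosed hMmem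
    (Submodule.Quotient.mk (1 : R) :
      ModuleCat.of R (R ⧸ Module.annihilator R M))
  refine ⟨n, m, le_antisymm ?_ ?_⟩
  · refine le_iInf fun i => fun r hr => ?_
    simpa [LinearMap.mem_ker, LinearMap.toSpanSingleton_apply] using
      (Module.mem_annihilator.mp hr) (m i)
  · intro r hr
    have h2 := hm hr
    rw [LinearMap.mem_ker, LinearMap.toSpanSingleton_apply, ← Submodule.Quotient.mk_smul,
      smul_eq_mul, mul_one, Submodule.Quotient.mk_eq_zero] at h2
    exact h2
end NCSpaces
end

section
/- Let C be a Grothendieck category with an effective divisor Y (as below) and let j^*: C → C/T_Y be the quotient by the localizing subcategory T_Y generated by Mod Y, with section functor j_*. Then Ext^1_C(j_*N, M) = 0 for every N in C/T_Y and every M in Mod Y; i.e., every extension in C of a T_Y-closed object by a Y-object splits. -/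
open CategoryTheory CategoryTheory.Limits

universe v u v' u'

namespace NCSpaces

/-- let `C` be a Grothendieck category carrying an effective divisor `Y`,
given by an autoequivalence `e.functor = (-)(-Y)` and a natural transformation
`ψ : (-)(-Y) ⟶ Id` whose kernels and cokernels are `Y`-objects (`Mod Y = {M | ψ_M = 0}`).
Let `q : C → C/T_Y` be the quotient by the localizing subcategory `T_Y` generated by
`Mod Y`, with fully faithful section functor `s`; in particular every `Y`-object is
killed by `q`, and `i^! ∘ s = 0 = i^* ∘ s` (the kernel and the cokernel of `ψ` vanish on
objects in the image of `s`).  Then `Ext¹_C(s N, M) = 0` for every `N` in `C/T_Y` and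
every `Y`-object `M`: each short exact sequence `0 → M → E → s N → 0` with `ψ_M = 0`
splits. -/
theorem ext_one_section_divisor_vanishes
    {C : Type u} [Category.{v} C] {D : Type u'} [Category.{v'} D]
    [Abelian C] [Abelian D]
    [HasLimits C] [HasColimits C] [HasFilteredColimits C] [AB5 C]
    (G : C) (hG : IsSeparator G)
    (e : C ≌ C) (ψ : e.functor ⟶ 𝟭 C)
    (hker : ∀ M : C, ψ.app (kernel (ψ.app M)) = 0)
    (hcoker : ∀ M : C, ψ.app (cokernel (ψ.app M)) = 0)
    (q : C ⥤ D) (s : D ⥤ C) (adj : q ⊣ s) [s.Full] [s.Faithful]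
    [PreservesFiniteLimits q]
    (hqY : ∀ M : C, ψ.app M = 0 → IsZero (q.obj M))
    (h1 : ∀ N : D, IsZero (kernel (ψ.app (s.obj N))))
    (h2 : ∀ N : D, IsZero (cokernel (ψ.app (s.obj N))))
    (N : D) (M E : C) (f : M ⟶ E) (g : E ⟶ s.obj N)
    (hM : ψ.app M = 0) (hf : Mono f) (hg : Epi g)
    (w : f ≫ g = 0) (hex : (ShortComplex.mk f g w).Exact) :
    ∃ r : E ⟶ M, f ≫ r = 𝟙 M := by

  haveI := hf; haveI := hg
  -- ψ at s.obj N is an isomorphism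
  haveI hmono : Mono (ψ.app (s.obj N)) :=
    Preadditive.mono_of_isZero_kernel _ (h1 N)
  haveI hepi : Epi (ψ.app (s.obj N)) :=
    Preadditive.epi_of_isZero_cokernel _ (h2 N)
  haveI : IsIso (ψ.app (s.obj N)) := isIso_of_mono_of_epi _
  -- map the exact sequence through the equivalence e
  have w' : e.functor.map f ≫ e.functor.map g = 0 := by
    rw [← e.functor.map_comp, w, Functor.map_zero]
  haveI : Epi (e.functor.map g) := e.functor.map_epi g
  have hex' : (ShortComplex.mk (e.functor.map f) (e.functor.map g) w').Exact := by
    exact hex.map e.functor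
  -- factor ψ.app E through e.functor.map g
  have hz : e.functor.map f ≫ ψ.app E = 0 := by
    have := ψ.naturality f
    simp only [Functor.id_map] at this
    rw [this, hM, zero_comp]
  set t := hex'.desc (ψ.app E) hz with htdef
  have ht : e.functor.map g ≫ t = ψ.app E := hex'.g_desc (ψ.app E) hz
  have htg : t ≫ g = ψ.app (s.obj N) := by
    have : e.functor.map g ≫ t ≫ g = e.functor.map g ≫ ψ.app (s.obj N) := by
      rw [← Category.assoc, ht]
      have := ψ.naturality g
      simpa using this
    exact (cancel_epi (e.functor.map g)).mp this
  -- section of g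
  set u : s.obj N ⟶ E := inv (ψ.app (s.obj N)) ≫ t with hu
  have hug : u ≫ g = 𝟙 (s.obj N) := by
    rw [hu, Category.assoc, htg, IsIso.inv_hom_id]
  -- retraction of f
  have hk : (𝟙 E - g ≫ u) ≫ g = 0 := by
    simp [Preadditive.sub_comp, Category.assoc, hug]
  set r := hex.lift (𝟙 E - g ≫ u) hk with hrdef
  have hr : r ≫ f = 𝟙 E - g ≫ u := hex.lift_f (𝟙 E - g ≫ u) hk
  have hfr : (f ≫ r) ≫ f = 𝟙 M ≫ f := by
    rw [Category.assoc, hr, Preadditive.comp_sub, Category.comp_id, ← Category.assoc, w,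
      zero_comp, sub_zero, Category.id_comp]
  exact ⟨r, (cancel_mono f).mp hfr⟩


end NCSpaces
end

section
/- Let C be a locally noetherian Grothendieck category and U, V two 'weakly open' localizations of C: quotients j^*: C → Mod U, i^*: C → Mod V by localizing subcategories T_U, T_V, realized as the full subcategories of C of local objects. Define U ∩ V as the quotient of C by the smallest localizing subcategory containing T_U and T_V, realized as its full subcategory of local objects. Then an object M of C is local for U ∩ V if and only if it is local for both U and V; i.e., Mod(U ∩ V) = Mod U ∩ Mod V as full subcategories of C. -/
/-!
Fix `M`. The objects `X` such that every subobject `Y ⊆ X` satisfies `Hom(Y, M) = 0` and splits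
every extension `0 → M → E → Y → 0` form a localizing subcategory, and it is the largest one for
which `M` is local. Closure under extensions is the exactness of
`Ext¹(X₃, M) → Ext¹(X₂, M) → Ext¹(X₁, M)`, done by hand with a pullback and a pushout; closure under
quotients uses that `Hom` vanishes on the kernel; closure under filtered colimits uses AB5: an
extension of `colim F` is the colimit of its pullbacks to the `F j`, whose retractions are unique
and hence glue. So if `M` is local for `T_U` and for `T_V`, this subcategory contains both, hence
their join, and `M` is local for the join; the converse is inherited from the smaller
subcategories.
-/

open CategoryTheory CategoryTheory.Limits

universe v u

namespace NCSpaces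

variable {C : Type u} [Category.{v} C]

/-- A full subcategory (given by a set of objects) is a *localizing subcategory* if it is
closed under isomorphisms, subobjects, quotient objects, extensions, and filtered
colimits. -/
structure IsLocalizing [Abelian C] (T : Set C) : Prop where
  mem_of_iso : ∀ {X Y : C}, (X ≅ Y) → X ∈ T → Y ∈ T
  mem_of_mono : ∀ {X Y : C} (f : X ⟶ Y), Mono f → Y ∈ T → X ∈ T
  mem_of_epi : ∀ {X Y : C} (f : X ⟶ Y), Epi f → X ∈ T → Y ∈ T
  mem_of_extension : ∀ (S : ShortComplex C), S.ShortExact →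
      S.X₁ ∈ T → S.X₃ ∈ T → S.X₂ ∈ T
  mem_of_colimit : ∀ (J : Type v) (_ : SmallCategory J) (_ : IsFiltered J) (F : J ⥤ C)
      (c : Cocone F), IsColimit c → (∀ j, F.obj j ∈ T) → c.pt ∈ T

/-- `M` is a *local object* for the localizing subcategory `T` (i.e. `M ≅ j_* j^* M`):
it has no nonzero maps from torsion objects, and no essential extensions by torsion
objects — equivalently, every short exact sequence `0 → M → E → T → 0` with `T ∈ T`
splits. -/
def IsLocalObject [Abelian C] (T : Set C) (M : C) : Prop :=
  (∀ A ∈ T, ∀ f : A ⟶ M, f = 0) ∧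
    (∀ (E : C) (f : M ⟶ E), Mono f → cokernel f ∈ T → ∃ r : E ⟶ M, f ≫ r = 𝟙 M)

section Perp

variable [Abelian C]

def ExtensionsSplit (Y M : C) : Prop :=
  ∀ ⦃E : C⦄ (f : M ⟶ E) (g : E ⟶ Y) (w : f ≫ g = 0),
    (ShortComplex.mk f g w).ShortExact → ∃ r : E ⟶ M, f ≫ r = 𝟙 M

structure IsLeftPerp (Y M : C) : Prop where
  hom_eq_zero : ∀ φ : Y ⟶ M, φ = 0
  extensionsSplit : ExtensionsSplit Y M

def hereditaryPerp (M : C) : Set C :=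
  {X | ∀ ⦃Z : C⦄ (i : Z ⟶ X), Mono i → IsLeftPerp Z M}

lemma shortExact_cokernel_π {X Y : C} (f : X ⟶ Y) [Mono f] :
    (ShortComplex.mk f (cokernel.π f) (cokernel.condition f)).ShortExact :=
  .mk' (ShortComplex.exact_of_g_is_cokernel _ (cokernelIsCokernel f)) inferInstance inferInstance

lemma shortExact_of_isPullback {M E Y E' Y' : C} {f : M ⟶ E} {g : E ⟶ Y} {w : f ≫ g = 0}
    (hS : (ShortComplex.mk f g w).ShortExact) {u : E' ⟶ E} {v : E' ⟶ Y'} {t : Y' ⟶ Y}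
    (sq : IsPullback u v g t) {m : M ⟶ E'} (hmu : m ≫ u = f) (hmv : m ≫ v = 0) :
    (ShortComplex.mk m v hmv).ShortExact := by
  have := hS.mono_f
  have := hS.epi_g
  have : Mono m := mono_of_mono_fac hmu
  have : Epi v := (MorphismProperty.epimorphisms C).of_isPullback sq (.infer_property g)
  refine .mk' ((ShortComplex.exact_iff_exact_up_to_refinements _).2 fun {A} x hx => ?_)
    inferInstance inferInstance
  dsimp at x hx ⊢
  have hxu : (x ≫ u) ≫ g = 0 := by rw [Category.assoc, sq.w, reassoc_of% hx, zero_comp]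
  refine ⟨A, 𝟙 A, inferInstance, hS.exact.lift (x ≫ u) hxu, sq.hom_ext ?_ ?_⟩
  · rw [Category.id_comp, Category.assoc, hmu]
    exact (hS.exact.lift_f _ _).symm
  · simp [hmv, hx]

lemma shortExact_of_isPushout {M E Y M' E' : C} {f : M ⟶ E} {g : E ⟶ Y} {w : f ≫ g = 0}
    (hS : (ShortComplex.mk f g w).ShortExact) {t : M ⟶ M'} {v : E ⟶ E'} {u : M' ⟶ E'}
    (sq : IsPushout f t v u) {p : E' ⟶ Y} (hvp : v ≫ p = g) (hup : u ≫ p = 0) :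
    (ShortComplex.mk u p hup).ShortExact := by
  have := hS.mono_f
  have := hS.epi_g
  have : Mono u := (MorphismProperty.monomorphisms C).of_isPushout sq.flip (.infer_property f)
  have : Epi p := epi_of_epi_fac hvp
  refine .mk' ((ShortComplex.exact_iff_exact_up_to_refinements _).2 fun {A} x hx => ?_)
    inferInstance inferInstance
  dsimp at x hx ⊢
  obtain ⟨A', π, _, x₂, x₃, hπx⟩ := sq.hom_eq_add_up_to_refinements x
  have hx₂ : x₂ ≫ g = 0 :=
    calc x₂ ≫ g = (x₂ ≫ v + x₃ ≫ u) ≫ p := by simp [hvp, hup]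
      _ = π ≫ x ≫ p := by rw [← hπx, Category.assoc]
      _ = 0 := by rw [hx, comp_zero]
  refine ⟨A', π, inferInstance, hS.exact.lift x₂ hx₂ ≫ t + x₃, ?_⟩
  rw [hπx, Preadditive.add_comp, Category.assoc, ← sq.w, ← Category.assoc,
    hS.exact.lift_f]

lemma retraction_unique {M E Y : C} {f : M ⟶ E} {g : E ⟶ Y} {w : f ≫ g = 0}
    (hS : (ShortComplex.mk f g w).ShortExact) (hY : ∀ φ : Y ⟶ M, φ = 0) {r r' : E ⟶ M}
    (hr : f ≫ r = 𝟙 M) (hr' : f ≫ r' = 𝟙 M) : r = r' := by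
  have := hS.epi_g
  have hf : f ≫ (r - r') = 0 := by rw [Preadditive.comp_sub, hr, hr', sub_self]
  rw [← sub_eq_zero, ← hS.exact.g_desc (r - r') hf, hY (hS.exact.desc _ hf), comp_zero]

lemma shortExact_of_isPullback_comp {X₁ X₂ X₃ E E₁ : C} {f : X₁ ⟶ X₂} {g : X₂ ⟶ X₃}
    {w : f ≫ g = 0} (hS : (ShortComplex.mk f g w).ShortExact) {e : E ⟶ X₂} [Epi e]
    {u : E₁ ⟶ E} {v : E₁ ⟶ X₁} (sq : IsPullback u v e f) :
    (ShortComplex.mk u (e ≫ g) (by rw [sq.w_assoc, w, comp_zero])).ShortExact := by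
  have := hS.mono_f
  have := hS.epi_g
  have : Mono u := sq.mono_fst_of_mono
  refine .mk' ((ShortComplex.exact_iff_exact_up_to_refinements _).2 fun {A} x hx => ?_)
    inferInstance (epi_comp e g)
  dsimp at x hx ⊢
  rw [← Category.assoc] at hx
  refine ⟨A, 𝟙 A, inferInstance, sq.lift x (hS.exact.lift _ hx) (hS.exact.lift_f _ _).symm, ?_⟩
  simp

lemma extensionsSplit_of_shortExact {X₁ X₂ X₃ M : C} {f : X₁ ⟶ X₂} {g : X₂ ⟶ X₃}
    {w : f ≫ g = 0} (hS : (ShortComplex.mk f g w).ShortExact)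
    (h₁ : ExtensionsSplit X₁ M) (h₃ : ExtensionsSplit X₃ M) : ExtensionsSplit X₂ M := by
  intro E i e hie hE
  have := hE.epi_g
  have sq := IsPullback.of_hasPullback e f
  obtain ⟨m, hmu, hmv⟩ : ∃ m : M ⟶ pullback e f,
      m ≫ pullback.fst e f = i ∧ m ≫ pullback.snd e f = 0 :=
    ⟨pullback.lift i 0 (by simp [hie]), pullback.lift_fst _ _ _, pullback.lift_snd _ _ _⟩
  obtain ⟨r₁, hr₁⟩ := h₁ m _ hmv (shortExact_of_isPullback hE sq hmu hmv)
  -- the retraction on `e⁻¹ X₁` is extended to `E` by splitting a pushout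
  have po := IsPushout.of_hasPushout (pullback.fst e f) r₁
  have hp : pushout.inr (pullback.fst e f) r₁ ≫ pushout.desc (e ≫ g) 0 (by simp [sq.w_assoc, w])
      = 0 := pushout.inr_desc _ _ _
  obtain ⟨ρ, hρ⟩ := h₃ _ _ hp (shortExact_of_isPushout
    (shortExact_of_isPullback_comp hS sq) po (pushout.inl_desc _ _ _) hp)
  refine ⟨pushout.inl _ _ ≫ ρ, ?_⟩
  rw [← hmu, Category.assoc, po.w_assoc, reassoc_of% hr₁, hρ]

lemma extensionsSplit_of_epi {Z Y M : C} (q : Z ⟶ Y) [Epi q] (hZ : ExtensionsSplit Z M)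
    (hK : ∀ φ : kernel q ⟶ M, φ = 0) : ExtensionsSplit Y M := by
  intro E f g w hE
  have sq := IsPullback.of_hasPullback g q
  obtain ⟨m, hmu, hmv⟩ : ∃ m : M ⟶ pullback g q,
      m ≫ pullback.fst g q = f ∧ m ≫ pullback.snd g q = 0 :=
    ⟨pullback.lift f 0 (by simp [w]), pullback.lift_fst _ _ _, pullback.lift_snd _ _ _⟩
  obtain ⟨r₀, hr₀⟩ := hZ m _ hmv (shortExact_of_isPullback hE sq hmu hmv)
  have : IsIso (kernel.map _ _ _ _ sq.w) := isIso_kernel_map_of_isPullback sq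
  have hr₀K : kernel.ι (pullback.fst g q) ≫ r₀ = 0 := by
    rw [← IsIso.hom_inv_id_assoc (kernel.map _ _ _ _ sq.w) (kernel.ι _ ≫ r₀),
      hK (inv _ ≫ _), comp_zero]
  refine ⟨Abelian.epiDesc _ r₀ hr₀K, ?_⟩
  rw [← hmu, Category.assoc, Abelian.comp_epiDesc, hr₀]

lemma IsLeftPerp.of_shortExact {X₁ X₂ X₃ M : C} {f : X₁ ⟶ X₂} {g : X₂ ⟶ X₃}
    {w : f ≫ g = 0} (hS : (ShortComplex.mk f g w).ShortExact)
    (h₁ : IsLeftPerp X₁ M) (h₃ : IsLeftPerp X₃ M) : IsLeftPerp X₂ M where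
  hom_eq_zero φ := by
    have := hS.epi_g
    rw [← hS.exact.g_desc φ (h₁.hom_eq_zero _), h₃.hom_eq_zero (hS.exact.desc φ _), comp_zero]
  extensionsSplit := extensionsSplit_of_shortExact hS h₁.extensionsSplit h₃.extensionsSplit

lemma IsLeftPerp.of_epi {Z Y M : C} (q : Z ⟶ Y) [Epi q] (hZ : IsLeftPerp Z M)
    (hK : ∀ φ : kernel q ⟶ M, φ = 0) : IsLeftPerp Y M where
  hom_eq_zero φ := by rw [← cancel_epi q, hZ.hom_eq_zero (q ≫ φ), comp_zero]
  extensionsSplit := extensionsSplit_of_epi q hZ.extensionsSplit hK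

lemma IsLeftPerp.of_isColimit {J : Type*} [Category J] [IsConnected J] [HasColimitsOfShape J C]
    [HasExactColimitsOfShape J C] {F : J ⥤ C} {c : Cocone F} (hc : IsColimit c) {M : C}
    (hF : ∀ j, IsLeftPerp (F.obj j) M) : IsLeftPerp c.pt M where
  hom_eq_zero φ := hc.hom_ext fun j => by rw [(hF j).hom_eq_zero (c.ι.app j ≫ φ), comp_zero]
  extensionsSplit := by
    intro E f g w hE
    -- `E` is the colimit of its pullbacks `E ×_{c.pt} F j`, each an extension of `F j` by `M`
    let P := pullback c.ι ((Functor.const J).map g)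
    let p := pullback.fst c.ι ((Functor.const J).map g)
    let q := pullback.snd c.ι ((Functor.const J).map g)
    have hE' : IsColimit (Cocone.mk E q) := hc.pullbackOfHasExactColimitsOfShape g
    have sq (j : J) : IsPullback (q.app j) (p.app j) g (c.ι.app j) :=
      ((IsPullback.of_hasPullback _ _).map ((evaluation J C).obj j)).flip
    have hm (j : J) : ∃ m : M ⟶ P.obj j, m ≫ q.app j = f ∧ m ≫ p.app j = 0 :=
      ⟨(sq j).lift f 0 (by simp [w]), (sq j).lift_fst _ _ _, (sq j).lift_snd _ _ _⟩
    choose m hmq hmp using hm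
    have hPj (j : J) := shortExact_of_isPullback hE (sq j) (hmq j) (hmp j)
    choose r hr using fun j => (hF j).extensionsSplit _ _ (hmp j) (hPj j)
    have hm_map {j k : J} (a : j ⟶ k) : m j ≫ P.map a = m k := by
      refine (sq k).hom_ext ?_ ?_
      · simp [hmq]
      · rw [Category.assoc, p.naturality, reassoc_of% hmp, zero_comp, hmp]
    have hr_map {j k : J} (a : j ⟶ k) : P.map a ≫ r k = r j :=
      retraction_unique (hPj j) (hF j).hom_eq_zero (by rw [reassoc_of% hm_map, hr]) (hr j)
    let ρ := hE'.desc (Cocone.mk M { app := r, naturality := fun j k a => by simpa using hr_map a })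
    obtain ⟨j⟩ : Nonempty J := IsConnected.is_nonempty
    exact ⟨ρ, by rw [← hmq j, Category.assoc, hE'.fac]; exact hr j⟩

lemma mem_hereditaryPerp_of_mono {X Y M : C} (f : X ⟶ Y) [Mono f] (hY : Y ∈ hereditaryPerp M) :
    X ∈ hereditaryPerp M :=
  fun _ i _ => hY (i ≫ f) inferInstance

lemma mem_hereditaryPerp_of_epi {X Y M : C} (f : X ⟶ Y) [Epi f] (hX : X ∈ hereditaryPerp M) :
    Y ∈ hereditaryPerp M := by
  intro Z i _
  exact (hX (pullback.fst f i) inferInstance).of_epi (pullback.snd f i) fun φ =>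
    (hX (kernel.ι _ ≫ pullback.fst f i) inferInstance).hom_eq_zero φ

lemma mem_hereditaryPerp_of_shortExact {S : ShortComplex C} (hS : S.ShortExact) {M : C}
    (h₁ : S.X₁ ∈ hereditaryPerp M) (h₃ : S.X₃ ∈ hereditaryPerp M) : S.X₂ ∈ hereditaryPerp M := by
  intro Z i _
  have := hS.mono_f
  have hK : kernel.ι (i ≫ S.g) ≫ i ≫ S.g = 0 := kernel.condition _
  rw [← Category.assoc] at hK
  have : Mono (hS.exact.lift _ hK) := mono_of_mono_fac (hS.exact.lift_f _ hK)
  exact .of_shortExact (shortExact_cokernel_π (kernel.ι (i ≫ S.g)))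
    (h₁ (hS.exact.lift _ hK) inferInstance) (h₃ (Abelian.factorThruCoimage (i ≫ S.g)) inferInstance)

lemma mem_hereditaryPerp_of_isColimit {J : Type*} [Category J] [IsConnected J]
    [HasColimitsOfShape J C] [HasExactColimitsOfShape J C] {F : J ⥤ C} {c : Cocone F}
    (hc : IsColimit c) {M : C} (hF : ∀ j, F.obj j ∈ hereditaryPerp M) :
    c.pt ∈ hereditaryPerp M := by
  intro Z i _
  refine IsLeftPerp.of_isColimit (hc.pullbackOfHasExactColimitsOfShape i) fun j =>
    hF j ((pullback.fst c.ι _).app j) ?_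
  exact ((IsPullback.of_hasPullback _ _).map ((evaluation J C).obj j)).mono_fst_of_mono
    (by dsimp; infer_instance)

lemma isLocalizing_hereditaryPerp [HasFilteredColimits C] [AB5 C] (M : C) :
    IsLocalizing (hereditaryPerp M) where
  mem_of_iso e := mem_hereditaryPerp_of_epi e.hom
  mem_of_mono f _ := mem_hereditaryPerp_of_mono f
  mem_of_epi f _ := mem_hereditaryPerp_of_epi f
  mem_of_extension _ hS := mem_hereditaryPerp_of_shortExact hS
  mem_of_colimit J _ _ _ _ hc :=
    have := IsFiltered.isConnected J
    mem_hereditaryPerp_of_isColimit hc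

lemma IsLocalObject.anti {T T' : Set C} {M : C} (hM : IsLocalObject T' M) (h : T ⊆ T') :
    IsLocalObject T M :=
  ⟨fun A hA => hM.1 A (h hA), fun E f hf hc => hM.2 E f hf (h hc)⟩

lemma isLocalObject_of_subset_hereditaryPerp {T : Set C} {M : C} (h : T ⊆ hereditaryPerp M) :
    IsLocalObject T M :=
  ⟨fun A hA => (h hA (𝟙 A) inferInstance).hom_eq_zero, fun _ f _ hc =>
    (h hc (𝟙 _) inferInstance).extensionsSplit f _ _ (shortExact_cokernel_π f)⟩

lemma subset_hereditaryPerp {T : Set C} (hT : IsLocalizing T) {M : C} (hM : IsLocalObject T M) :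
    T ⊆ hereditaryPerp M := by
  intro X hX Z i _
  have hZ : Z ∈ T := hT.mem_of_mono i inferInstance hX
  refine ⟨hM.1 Z hZ, fun E f g w hE => hM.2 E f hE.mono_f (hT.mem_of_iso ?_ hZ)⟩
  have := hE.epi_g
  exact (IsColimit.coconePointUniqueUpToIso (cokernelIsCokernel f) hE.exact.gIsCokernel).symm

end Perp

theorem local_for_join_iff_general
    [Abelian C] [HasFilteredColimits C] [AB5 C]
    (TU TV : Set C) (hU : IsLocalizing TU) (hV : IsLocalizing TV) :
    ∀ M : C,
      IsLocalObject {X | ∀ T : Set C, IsLocalizing T → TU ⊆ T → TV ⊆ T → X ∈ T} M ↔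
        (IsLocalObject TU M ∧ IsLocalObject TV M) := by
  intro M
  constructor
  · intro hM
    exact ⟨hM.anti fun X hX _ _ hTU _ => hTU hX, hM.anti fun X hX _ _ _ hTV => hTV hX⟩
  · rintro ⟨hMU, hMV⟩
    exact isLocalObject_of_subset_hereditaryPerp fun X hX => hX _ (isLocalizing_hereditaryPerp M)
      (subset_hereditaryPerp hU hMU) (subset_hereditaryPerp hV hMV)

/-- let `C` be a locally noetherian Grothendieck category and `T_U`, `T_V`
two localizing subcategories, with weakly open subspaces `U`, `V` given by their local
objects.  Let `U ∩ V` be given by the local objects for the smallest localizing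
subcategory containing `T_U` and `T_V`.  Then an object is local for `U ∩ V` iff it is
local for both `U` and `V`: `Mod (U ∩ V) = Mod U ∩ Mod V`. -/
theorem local_for_join_iff
    [Abelian C] [HasLimits C] [HasColimits C] [HasFilteredColimits C] [AB5 C]
    (κ : Type v) (Gen : κ → C) (hsep : ObjectProperty.IsSeparating (fun G => G ∈ Set.range Gen))
    (hnoeth : ∀ i, IsNoetherianObject (Gen i))
    (TU TV : Set C) (hU : IsLocalizing TU) (hV : IsLocalizing TV) :
    ∀ M : C,
      IsLocalObject {X | ∀ T : Set C, IsLocalizing T → TU ⊆ T → TV ⊆ T → X ∈ T} M ↔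
        (IsLocalObject TU M ∧ IsLocalObject TV M) :=
  local_for_join_iff_general TU TV hU hV

end NCSpaces
end
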